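/- AM-GAN generator loss decomposition: for a generated sample with one-hot target v(y), y ∈ {1,…,K}, and softmax output D over K+1 classes with all entries positive, H(v(y), D) = H(R(v(y)), R(D)) + H([1,0], [D_r, D_{K+1}]), i.e., the AM-GAN loss equals the auxiliary-classifier cross-entropy over the K real classes plus the LabelGAN real-vs-fake cross-entropy. -/

import Mathlib

open Real Finset

theorem neg_sum_indicator_mul_log {ι : Type*} [Fintype ι] [DecidableEq ι] (p : ι → ℝ) (j : ι) :
    -∑ i, (if i = j then (1 : ℝ) else 0) * log (p i) = -log (p j) := by
  simp only [ite_mul, one_mul, zero_mul, sum_ite_eq', mem_univ, if_true]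

theorem stmt11_general {K : ℕ} (y : Fin K) (D : Fin (K + 1) → ℝ)
    (hD_pos : ∀ i, 0 < D i)
    (Dr : ℝ) (hDr : Dr = ∑ k : Fin K, D k.castSucc) :
    (-∑ i, (if i = y.castSucc then (1 : ℝ) else 0) * Real.log (D i)) =
      (-∑ k : Fin K, (if k = y then (1 : ℝ) else 0) *
          Real.log (D k.castSucc / Dr)) +
      (-((1 : ℝ) * Real.log Dr + (0 : ℝ) * Real.log (D (Fin.last K)))) := by
  have hDr_pos : 0 < Dr := by
    rw [hDr]
    exact (hD_pos _).trans_le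
      (single_le_sum (fun k _ => (hD_pos k.castSucc).le) (mem_univ y))
  rw [neg_sum_indicator_mul_log, neg_sum_indicator_mul_log,
    log_div (hD_pos _).ne' hDr_pos.ne']
  ring

/-- AM-GAN generator loss decomposition: with one-hot target `v(y)` and a
strictly positive probability vector `D` over `K+1` classes,
`H(v(y), D) = H(R(v(y)), R(D)) + H([1,0],[D_r, D_{K+1}])`. -/
theorem stmt11 {K : ℕ} (hK : 1 ≤ K) (y : Fin K) (D : Fin (K + 1) → ℝ)
    (hD_pos : ∀ i, 0 < D i) (hD_sum : ∑ i, D i = 1)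
    (Dr : ℝ) (hDr : Dr = ∑ k : Fin K, D k.castSucc) :
    (-∑ i, (if i = y.castSucc then (1 : ℝ) else 0) * Real.log (D i)) =
      (-∑ k : Fin K, (if k = y then (1 : ℝ) else 0) *
          Real.log (D k.castSucc / Dr)) +
      (-((1 : ℝ) * Real.log Dr + (0 : ℝ) * Real.log (D (Fin.last K)))) :=
  stmt11_general y D hD_pos Dr hDr
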